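/- Let Z be a finite-dimensional normed space with Auerbach basis (e_k, e_k*), contractively complemented in a normed space L via projection Q, and let E be an L-space (L ⊗ E carries a contractible cross-norm). For u ∈ L ⊗ E let I(u) : Z* → E, g ↦ (g ⊗ 1_E)(Q·u). Then (1_L ⊗ I(u))(w) = Q·u, where w = Σ_k e_k ⊗ e_k* ∈ L ⊗ Z*. Consequently ‖1_L ⊗ I(u)‖_{L⊗_ε Z* → L⊗E} = ‖Q·u‖. -/

import Mathlib

/-!
Under the canonical map `J : L ⊗ Z* → B(Z, L)`, `ξ ⊗ g ↦ g(·) ξ`, the injective norm of `v` is the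
operator norm of `J v`, and `(1_L ⊗ I(u)) v = (J v ∘ Q ⊗ 1_E) u`. Biorthogonality of the Auerbach
system makes `J w` the inclusion `Z ↪ L`, which gives the identity and shows `w` lies in the unit
ball. For any `v` in the unit ball, `J v ∘ Q` is a contraction that factors through `Q` (as `Q` is
idempotent), so contractibility of the cross-norm bounds `N((1_L ⊗ I(u)) v)` by `N(Q·u)`.
-/

/-- The injective tensor norm on the algebraic tensor product of two normed spaces. -/
noncomputable def injNorm (L E : Type*) [NormedAddCommGroup L] [NormedSpace ℝ L]
    [NormedAddCommGroup E] [NormedSpace ℝ E] (u : TensorProduct ℝ L E) : ℝ :=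
  ⨆ fg : Metric.closedBall (0 : L →L[ℝ] ℝ) 1 × Metric.closedBall (0 : E →L[ℝ] ℝ) 1,
    |TensorProduct.lid ℝ ℝ
      (TensorProduct.map ((fg.1 : L →L[ℝ] ℝ) : L →ₗ[ℝ] ℝ)
        ((fg.2 : E →L[ℝ] ℝ) : E →ₗ[ℝ] ℝ) u)|

/-- The operator `I(u) : Z* → E`, `g ↦ (g ⊗ 1_E)(Q · u)`. -/
noncomputable def Imap {L E : Type*} [NormedAddCommGroup L] [NormedSpace ℝ L]
    [AddCommGroup E] [Module ℝ E] (Zsub : Submodule ℝ L)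
    (Q : L →L[ℝ] L) (hmem : ∀ ξ, Q ξ ∈ Zsub)
    (u : TensorProduct ℝ L E) : (Zsub →L[ℝ] ℝ) →ₗ[ℝ] E where
  toFun g := TensorProduct.lid ℝ E
    (TensorProduct.map
      ((g : Zsub →ₗ[ℝ] ℝ) ∘ₗ LinearMap.codRestrict Zsub (Q : L →ₗ[ℝ] L) hmem)
      LinearMap.id u)
  map_add' g g' := by
    simp only [ContinuousLinearMap.coe_add, LinearMap.add_comp,
      TensorProduct.map_add_left, LinearMap.add_apply, map_add]
  map_smul' c g := by
    simp only [ContinuousLinearMap.coe_smul, LinearMap.smul_comp,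
      TensorProduct.map_smul_left, LinearMap.smul_apply, map_smul, RingHom.id_apply]

open TensorProduct

section InjNorm

variable {L G : Type*} [NormedAddCommGroup L] [NormedSpace ℝ L]
  [NormedAddCommGroup G] [NormedSpace ℝ G]

lemma injNorm_nonneg (v : L ⊗[ℝ] G) : 0 ≤ injNorm L G v :=
  Real.iSup_nonneg fun _ => abs_nonneg _

lemma bddAbove_range_abs_lid_map (v : L ⊗[ℝ] G) :
    BddAbove (Set.range fun fg : Metric.closedBall (0 : L →L[ℝ] ℝ) 1 ×
        Metric.closedBall (0 : G →L[ℝ] ℝ) 1 =>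
      |TensorProduct.lid ℝ ℝ (TensorProduct.map ((fg.1 : L →L[ℝ] ℝ) : L →ₗ[ℝ] ℝ)
        ((fg.2 : G →L[ℝ] ℝ) : G →ₗ[ℝ] ℝ) v)|) := by
  induction v using TensorProduct.induction_on with
  | zero => exact ⟨0, by rintro _ ⟨_, rfl⟩; simp⟩
  | tmul ξ g =>
    refine ⟨‖ξ‖ * ‖g‖, ?_⟩
    rintro _ ⟨⟨⟨f, hf⟩, ⟨φ, hφ⟩⟩, rfl⟩
    rw [mem_closedBall_zero_iff] at hf hφ
    simp only [TensorProduct.map_tmul, TensorProduct.lid_tmul, ContinuousLinearMap.coe_coe,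
      smul_eq_mul, abs_mul, ← Real.norm_eq_abs]
    calc ‖f ξ‖ * ‖φ g‖ ≤ (‖f‖ * ‖ξ‖) * (‖φ‖ * ‖g‖) := by
          gcongr <;> apply ContinuousLinearMap.le_opNorm
      _ ≤ (1 * ‖ξ‖) * (1 * ‖g‖) := by gcongr
      _ = ‖ξ‖ * ‖g‖ := by ring
  | add v₁ v₂ h₁ h₂ =>
    obtain ⟨C₁, hC₁⟩ := h₁
    obtain ⟨C₂, hC₂⟩ := h₂
    refine ⟨C₁ + C₂, ?_⟩
    rintro _ ⟨fg, rfl⟩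
    simp only [map_add]
    exact (abs_add_le _ _).trans (add_le_add (hC₁ ⟨fg, rfl⟩) (hC₂ ⟨fg, rfl⟩))

lemma abs_lid_map_le_injNorm (v : L ⊗[ℝ] G) {f : L →L[ℝ] ℝ} {φ : G →L[ℝ] ℝ}
    (hf : ‖f‖ ≤ 1) (hφ : ‖φ‖ ≤ 1) :
    |TensorProduct.lid ℝ ℝ (TensorProduct.map (f : L →ₗ[ℝ] ℝ) (φ : G →ₗ[ℝ] ℝ) v)| ≤
      injNorm L G v :=
  le_ciSup (bddAbove_range_abs_lid_map v)
    (⟨f, mem_closedBall_zero_iff.mpr hf⟩, ⟨φ, mem_closedBall_zero_iff.mpr hφ⟩)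

end InjNorm

section TensorDualToHom

variable {L F : Type*} [NormedAddCommGroup L] [NormedSpace ℝ L]
  [NormedAddCommGroup F] [NormedSpace ℝ F]

noncomputable def tensorDualToHom : L ⊗[ℝ] (F →L[ℝ] ℝ) →ₗ[ℝ] (F →L[ℝ] L) :=
  TensorProduct.lift (ContinuousLinearMap.toLinearMap₁₂ (ContinuousLinearMap.smulRightL ℝ F L)).flip

@[simp] lemma tensorDualToHom_tmul (ξ : L) (g : F →L[ℝ] ℝ) :
    tensorDualToHom (ξ ⊗ₜ[ℝ] g) = g.smulRight ξ := rfl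

lemma lid_map_eq_apply_comp_tensorDualToHom (v : L ⊗[ℝ] (F →L[ℝ] ℝ)) (f : L →L[ℝ] ℝ)
    (φ : (F →L[ℝ] ℝ) →L[ℝ] ℝ) :
    TensorProduct.lid ℝ ℝ (TensorProduct.map (f : L →ₗ[ℝ] ℝ) (φ : (F →L[ℝ] ℝ) →ₗ[ℝ] ℝ) v) =
      φ (f.comp (tensorDualToHom v)) := by
  induction v using TensorProduct.induction_on with
  | zero => simp
  | tmul ξ g =>
    have : f.comp (g.smulRight ξ) = f ξ • g := by ext; simp [mul_comm]
    simp [this]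
  | add v₁ v₂ h₁ h₂ => simp [h₁, h₂, ContinuousLinearMap.comp_add]

lemma abs_lid_map_le_norm_tensorDualToHom (v : L ⊗[ℝ] (F →L[ℝ] ℝ)) {f : L →L[ℝ] ℝ}
    {φ : (F →L[ℝ] ℝ) →L[ℝ] ℝ} (hf : ‖f‖ ≤ 1) (hφ : ‖φ‖ ≤ 1) :
    |TensorProduct.lid ℝ ℝ (TensorProduct.map (f : L →ₗ[ℝ] ℝ) (φ : (F →L[ℝ] ℝ) →ₗ[ℝ] ℝ) v)| ≤
      ‖tensorDualToHom v‖ := by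
  rw [lid_map_eq_apply_comp_tensorDualToHom, ← Real.norm_eq_abs]
  calc ‖φ (f.comp (tensorDualToHom v))‖ ≤ ‖φ‖ * (‖f‖ * ‖tensorDualToHom v‖) :=
        (φ.le_opNorm _).trans (by gcongr; exact f.opNorm_comp_le _)
    _ ≤ 1 * (1 * ‖tensorDualToHom v‖) := by gcongr
    _ = ‖tensorDualToHom v‖ := by ring

lemma injNorm_le_norm_tensorDualToHom (v : L ⊗[ℝ] (F →L[ℝ] ℝ)) :
    injNorm L (F →L[ℝ] ℝ) v ≤ ‖tensorDualToHom v‖ :=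
  Real.iSup_le (fun ⟨⟨_, hf⟩, ⟨_, hφ⟩⟩ => abs_lid_map_le_norm_tensorDualToHom v
    (by simpa using hf) (by simpa using hφ)) (norm_nonneg _)

lemma norm_tensorDualToHom_le_injNorm (v : L ⊗[ℝ] (F →L[ℝ] ℝ)) :
    ‖tensorDualToHom v‖ ≤ injNorm L (F →L[ℝ] ℝ) v := by
  have hcomp : ∀ f : L →L[ℝ] ℝ, ‖f‖ ≤ 1 →
      ‖f.comp (tensorDualToHom v)‖ ≤ injNorm L (F →L[ℝ] ℝ) v := by
    intro f hf
    obtain ⟨φ, hφ, hφg⟩ := exists_dual_vector'' ℝ (f.comp (tensorDualToHom v))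
    calc ‖f.comp (tensorDualToHom v)‖ = φ (f.comp (tensorDualToHom v)) := by simpa using hφg.symm
      _ ≤ |φ (f.comp (tensorDualToHom v))| := le_abs_self _
      _ ≤ injNorm L (F →L[ℝ] ℝ) v := by
        rw [← lid_map_eq_apply_comp_tensorDualToHom]; exact abs_lid_map_le_injNorm v hf hφ
  refine ContinuousLinearMap.opNorm_le_bound _ (injNorm_nonneg v) fun z => ?_
  obtain ⟨f, hf, hfz⟩ := exists_dual_vector'' ℝ (tensorDualToHom v z)
  calc ‖tensorDualToHom v z‖ = f.comp (tensorDualToHom v) z := by simpa using hfz.symm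
    _ ≤ ‖f.comp (tensorDualToHom v)‖ * ‖z‖ := (le_abs_self _).trans (by
        simpa using (f.comp (tensorDualToHom v)).le_opNorm z)
    _ ≤ injNorm L (F →L[ℝ] ℝ) v * ‖z‖ := by gcongr; exact hcomp f hf

theorem norm_tensorDualToHom (v : L ⊗[ℝ] (F →L[ℝ] ℝ)) :
    ‖tensorDualToHom v‖ = injNorm L (F →L[ℝ] ℝ) v :=
  (norm_tensorDualToHom_le_injNorm v).antisymm (injNorm_le_norm_tensorDualToHom v)

lemma tensorDualToHom_sum_tmul_of_biorthogonal {ι : Type*} [Fintype ι] [DecidableEq ι]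
    (b : Module.Basis ι ℝ F) (estar : ι → F →L[ℝ] ℝ)
    (hdual : ∀ k l, estar k (b l) = if k = l then 1 else 0) (T : F →L[ℝ] L) :
    tensorDualToHom (∑ k, T (b k) ⊗ₜ[ℝ] estar k) = T := by
  have hrepr : ∀ k z, estar k z = b.repr z k := fun k =>
    LinearMap.congr_fun (b.ext (f₁ := (estar k : F →ₗ[ℝ] ℝ)) (f₂ := b.coord k) fun l => by
      simp [hdual, Finsupp.single_apply, eq_comm])
  ext z
  simp only [map_sum, tensorDualToHom_tmul, sum_apply,
    ContinuousLinearMap.smulRight_apply, hrepr]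
  conv_rhs => rw [← b.sum_repr z, map_sum]
  simp only [map_smul]

end TensorDualToHom

lemma map_id_Imap_eq_rTensor {L E : Type*} [NormedAddCommGroup L] [NormedSpace ℝ L]
    [AddCommGroup E] [Module ℝ E] (Zsub : Submodule ℝ L) (Q : L →L[ℝ] L)
    (hmem : ∀ ξ, Q ξ ∈ Zsub) (u : L ⊗[ℝ] E) (v : L ⊗[ℝ] (Zsub →L[ℝ] ℝ)) :
    TensorProduct.map LinearMap.id (Imap Zsub Q hmem u) v =
      LinearMap.rTensor E
        (((tensorDualToHom v).comp (Q.codRestrict Zsub hmem) : L →L[ℝ] L) : L →ₗ[ℝ] L) u := by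
  induction v using TensorProduct.induction_on with
  | zero => simp
  | tmul η g =>
    simp only [TensorProduct.map_tmul, LinearMap.id_apply, Imap, LinearMap.coe_mk,
      AddHom.coe_mk]
    induction u using TensorProduct.induction_on with
    | zero => simp
    | tmul ξ x => simp [TensorProduct.tmul_smul, TensorProduct.smul_tmul']
    | add u₁ u₂ h₁ h₂ => simp [TensorProduct.tmul_add, h₁, h₂]
  | add v₁ v₂ h₁ h₂ => simp [h₁, h₂, ContinuousLinearMap.add_comp, LinearMap.rTensor_add]

lemma ContinuousLinearMap.norm_codRestrict_le {𝕜 E F : Type*} [NontriviallyNormedField 𝕜]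
    [SeminormedAddCommGroup E] [NormedSpace 𝕜 E] [SeminormedAddCommGroup F] [NormedSpace 𝕜 F]
    (f : E →L[𝕜] F) (p : Submodule 𝕜 F) (h : ∀ x, f x ∈ p) : ‖f.codRestrict p h‖ ≤ ‖f‖ :=
  (f.codRestrict p h).opNorm_le_bound (norm_nonneg f) f.le_opNorm

lemma apply_rTensor_le_of_comp_eq {L E : Type*} [NormedAddCommGroup L] [NormedSpace ℝ L]
    [AddCommGroup E] [Module ℝ E] {N : L ⊗[ℝ] E → ℝ} (hN : ∀ x, 0 ≤ N x)
    (hcontr : ∀ (a : L →L[ℝ] L) (u : L ⊗[ℝ] E),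
      N (LinearMap.rTensor E (a : L →ₗ[ℝ] L) u) ≤ ‖a‖ * N u)
    {T P : L →L[ℝ] L} (hT : ‖T‖ ≤ 1) (hTP : T.comp P = T) (u : L ⊗[ℝ] E) :
    N (LinearMap.rTensor E (T : L →ₗ[ℝ] L) u) ≤ N (LinearMap.rTensor E (P : L →ₗ[ℝ] L) u) := calc
  N (LinearMap.rTensor E (T : L →ₗ[ℝ] L) u)
      = N (LinearMap.rTensor E (T : L →ₗ[ℝ] L) (LinearMap.rTensor E (P : L →ₗ[ℝ] L) u)) := by
        rw [← LinearMap.rTensor_comp_apply, ← ContinuousLinearMap.toLinearMap_comp, hTP]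
  _ ≤ ‖T‖ * N (LinearMap.rTensor E (P : L →ₗ[ℝ] L) u) := hcontr T _
  _ ≤ N (LinearMap.rTensor E (P : L →ₗ[ℝ] L) u) := mul_le_of_le_one_left (hN _) hT

theorem stmt13_general {L E : Type*} [NormedAddCommGroup L] [NormedSpace ℝ L]
    [AddCommGroup E] [Module ℝ E]
    (Zsub : Submodule ℝ L)
    (Q : L →L[ℝ] L) (hQ1 : ‖Q‖ ≤ 1)
    (hmem : ∀ ξ, Q ξ ∈ Zsub) (hfix : ∀ z ∈ Zsub, Q z = z)
    {n : ℕ} (b : Module.Basis (Fin n) ℝ Zsub) (estar : Fin n → (Zsub →L[ℝ] ℝ))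
    (hdual : ∀ k l, estar k (b l) = if k = l then 1 else 0)
    (N : TensorProduct ℝ L E → ℝ)
    (hadd : ∀ u v, N (u + v) ≤ N u + N v)
    (hsmul : ∀ (c : ℝ) u, N (c • u) = |c| * N u)
    (hcontr : ∀ (a : L →L[ℝ] L) (u : TensorProduct ℝ L E),
      N (LinearMap.rTensor E (a : L →ₗ[ℝ] L) u) ≤ ‖a‖ * N u) :
    ∀ u : TensorProduct ℝ L E,
      TensorProduct.map LinearMap.id (Imap Zsub Q hmem u)
          (∑ k, (b k : L) ⊗ₜ[ℝ] estar k) =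
        LinearMap.rTensor E (Q : L →ₗ[ℝ] L) u ∧
      IsGreatest
        {r : ℝ | ∃ v : TensorProduct ℝ L (Zsub →L[ℝ] ℝ),
          injNorm L (Zsub →L[ℝ] ℝ) v ≤ 1 ∧
          r = N (TensorProduct.map LinearMap.id (Imap Zsub Q hmem u) v)}
        (N (LinearMap.rTensor E (Q : L →ₗ[ℝ] L) u)) := by
  intro u
  set w := ∑ k, (b k : L) ⊗ₜ[ℝ] estar k
  set Qr := Q.codRestrict Zsub hmem
  have hJw : tensorDualToHom w = Zsub.subtypeL :=
    tensorDualToHom_sum_tmul_of_biorthogonal b estar hdual Zsub.subtypeL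
  have hw : TensorProduct.map LinearMap.id (Imap Zsub Q hmem u) w =
      LinearMap.rTensor E (Q : L →ₗ[ℝ] L) u := by
    rw [map_id_Imap_eq_rTensor, hJw]
    rfl
  have hN : ∀ x, 0 ≤ N x :=
    apply_nonneg (Seminorm.of (𝕜 := ℝ) N hadd fun c x => by rw [hsmul, Real.norm_eq_abs])
  refine ⟨hw, ⟨w, ?_, congrArg N hw.symm⟩, ?_⟩
  · rw [← norm_tensorDualToHom, hJw]
    exact Submodule.norm_subtypeL_le Zsub
  rintro _ ⟨v, hv, rfl⟩
  have hT : ‖(tensorDualToHom v).comp Qr‖ ≤ 1 :=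
    ((tensorDualToHom v).opNorm_comp_le Qr).trans <| mul_le_one₀
      (by rwa [norm_tensorDualToHom]) (norm_nonneg _) ((Q.norm_codRestrict_le Zsub hmem).trans hQ1)
  have hQrQ : Qr.comp Q = Qr := ContinuousLinearMap.ext fun ξ => Subtype.ext (hfix _ (hmem ξ))
  rw [map_id_Imap_eq_rTensor]
  exact apply_rTensor_le_of_comp_eq hN hcontr hT (by rw [ContinuousLinearMap.comp_assoc, hQrQ]) u

/-- For a finite-dimensional subspace `Z` of `L` with Auerbach basis
`(e_k, e_k*)`, contractively complemented via `Q`, and an `L`-space `E`: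
`(1_L ⊗ I(u))(w) = Q·u` where `w = Σ_k e_k ⊗ e_k*`; consequently the operator norm of
`1_L ⊗ I(u) : L ⊗_ε Z* → L ⊗ E` equals `‖Q·u‖` (and is attained). -/
theorem stmt13 {L E : Type*} [NormedAddCommGroup L] [NormedSpace ℝ L]
    [AddCommGroup E] [Module ℝ E]
    (Zsub : Submodule ℝ L) [FiniteDimensional ℝ Zsub]
    (Q : L →L[ℝ] L) (hQ1 : ‖Q‖ ≤ 1)
    (hmem : ∀ ξ, Q ξ ∈ Zsub) (hfix : ∀ z ∈ Zsub, Q z = z)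
    {n : ℕ} (b : Module.Basis (Fin n) ℝ Zsub) (estar : Fin n → (Zsub →L[ℝ] ℝ))
    (hdual : ∀ k l, estar k (b l) = if k = l then 1 else 0)
    (hb1 : ∀ k, ‖b k‖ = 1) (hestar1 : ∀ k, ‖estar k‖ = 1)
    (N : TensorProduct ℝ L E → ℝ)
    (hadd : ∀ u v, N (u + v) ≤ N u + N v)
    (hsmul : ∀ (c : ℝ) u, N (c • u) = |c| * N u)
    (hdef : ∀ u, N u = 0 ↔ u = 0)
    (hcontr : ∀ (a : L →L[ℝ] L) (u : TensorProduct ℝ L E),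
      N (LinearMap.rTensor E (a : L →ₗ[ℝ] L) u) ≤ ‖a‖ * N u) :
    ∀ u : TensorProduct ℝ L E,
      TensorProduct.map LinearMap.id (Imap Zsub Q hmem u)
          (∑ k, (b k : L) ⊗ₜ[ℝ] estar k) =
        LinearMap.rTensor E (Q : L →ₗ[ℝ] L) u ∧
      IsGreatest
        {r : ℝ | ∃ v : TensorProduct ℝ L (Zsub →L[ℝ] ℝ),
          injNorm L (Zsub →L[ℝ] ℝ) v ≤ 1 ∧
          r = N (TensorProduct.map LinearMap.id (Imap Zsub Q hmem u) v)}
        (N (LinearMap.rTensor E (Q : L →ₗ[ℝ] L) u)) :=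
  stmt13_general Zsub Q hQ1 hmem hfix b estar hdual N hadd hsmul hcontr
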